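/- Let u be a weight on (0,∞) and 0 < p < ∞. If u belongs to B_p, then there exists C' > 0 such that for every n ∈ ℕ ∪ {0} and every a ∈ [0,1], ∫_a^1 (a/t)^p u(n+t) dt ≤ C' ∫_0^{n+a} u(t) dt. -/

import Mathlib

/-!
For `t ∈ (a, 1]` one has `a / t ≤ (n + a) / (n + t)`, so after the translation `x = n + t` the
left-hand side is at most `(n + a)^p ∫_{n+a}^∞ u(x) x^{-p} dx`, which the `B_p` condition at
`r = n + a` bounds by `C ∫_0^{n+a} u`. The case `a = 0` is trivial, since then `(a / t)^p = 0`.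
-/

open MeasureTheory Set
open scoped ENNReal NNReal

/-- A weight `v` on `(0,∞)` belongs to `B_p` if there is `C > 0` with
`r^p ∫_r^∞ v(x) x^(-p) dx ≤ C ∫_0^r v(x) dx` for all `r > 0`. -/
def BpWeight (v : ℝ → ℝ≥0) (p : ℝ) : Prop :=
  ∃ C : ℝ, 0 < C ∧ ∀ r : ℝ, 0 < r →
    ENNReal.ofReal (r ^ p) *
        ∫⁻ x in Set.Ioi r, (v x : ℝ≥0∞) * ENNReal.ofReal (x ^ (-p)) ≤
      ENNReal.ofReal C * ∫⁻ x in Set.Ioc (0 : ℝ) r, (v x : ℝ≥0∞)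

lemma div_le_add_div_add {a t s : ℝ} (hat : a ≤ t) (hs : 0 ≤ s) (ht : 0 < t) :
    a / t ≤ (s + a) / (s + t) := by
  rw [div_le_div_iff₀ ht (by positivity)]
  nlinarith

lemma div_rpow_le_rpow_mul_rpow_neg {a t s p : ℝ} (ha : 0 ≤ a) (hat : a ≤ t) (hs : 0 ≤ s)
    (ht : 0 < t) (hp : 0 ≤ p) :
    (a / t) ^ p ≤ (s + a) ^ p * (s + t) ^ (-p) := by
  have hst : 0 < s + t := by positivity
  calc (a / t) ^ p ≤ ((s + a) / (s + t)) ^ p :=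
        Real.rpow_le_rpow (by positivity) (div_le_add_div_add hat hs ht) hp
    _ = (s + a) ^ p * (s + t) ^ (-p) := by
        rw [Real.div_rpow (by positivity) hst.le, Real.rpow_neg hst.le, div_eq_mul_inv]

lemma setLIntegral_Ioc_comp_const_add (f : ℝ → ℝ≥0∞) (s a b : ℝ) :
    ∫⁻ t in Ioc a b, f (s + t) = ∫⁻ x in Ioc (s + a) (s + b), f x := by
  rw [← image_const_add_Ioc,
    (measurePreserving_add_left volume s).setLIntegral_comp_emb
      (MeasurableEquiv.addLeft s).measurableEmbedding]

lemma setLIntegral_Ioc_div_rpow_mul_comp_const_add_le (v : ℝ → ℝ≥0∞) {a s p : ℝ} (b : ℝ)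
    (ha : 0 < a) (hs : 0 ≤ s) (hp : 0 ≤ p) :
    ∫⁻ t in Ioc a b, ENNReal.ofReal ((a / t) ^ p) * v (s + t) ≤
      ENNReal.ofReal ((s + a) ^ p) * ∫⁻ x in Ioi (s + a), v x * ENNReal.ofReal (x ^ (-p)) := by
  calc ∫⁻ t in Ioc a b, ENNReal.ofReal ((a / t) ^ p) * v (s + t)
      ≤ ∫⁻ t in Ioc a b, ENNReal.ofReal ((s + a) ^ p) *
          (v (s + t) * ENNReal.ofReal ((s + t) ^ (-p))) := by
        refine setLIntegral_mono' measurableSet_Ioc fun t ht => ?_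
        have ht0 : 0 < t := ha.trans ht.1
        rw [mul_left_comm, ← ENNReal.ofReal_mul (by positivity), mul_comm]
        gcongr
        exact div_rpow_le_rpow_mul_rpow_neg ha.le ht.1.le hs ht0 hp
    _ = ENNReal.ofReal ((s + a) ^ p) *
          ∫⁻ x in Ioc (s + a) (s + b), v x * ENNReal.ofReal (x ^ (-p)) := by
        rw [lintegral_const_mul' _ _ ENNReal.ofReal_ne_top,
          setLIntegral_Ioc_comp_const_add (fun x => v x * ENNReal.ofReal (x ^ (-p)))]
    _ ≤ ENNReal.ofReal ((s + a) ^ p) * ∫⁻ x in Ioi (s + a), v x * ENNReal.ofReal (x ^ (-p)) := by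
        gcongr
        exact Ioc_subset_Ioi_self

theorem stmt11_general (u : ℝ → ℝ≥0)
    (p : ℝ) (hp : 0 < p) (hBp : BpWeight u p) :
    ∃ C' : ℝ, 0 < C' ∧ ∀ n : ℕ, ∀ a ∈ Set.Icc (0 : ℝ) 1,
      ∫⁻ t in Set.Ioc a 1, ENNReal.ofReal ((a / t) ^ p) * (u ((n : ℝ) + t) : ℝ≥0∞) ≤
        ENNReal.ofReal C' * ∫⁻ t in Set.Ioc (0 : ℝ) ((n : ℝ) + a), (u t : ℝ≥0∞) := by
  obtain ⟨C, hC, hB⟩ := hBp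
  refine ⟨C, hC, fun n a ha => ?_⟩
  rcases ha.1.eq_or_lt with rfl | ha0
  · simp [Real.zero_rpow hp.ne']
  calc _ ≤ _ := setLIntegral_Ioc_div_rpow_mul_comp_const_add_le (fun x => (u x : ℝ≥0∞)) 1 ha0
          n.cast_nonneg hp.le
    _ ≤ _ := hB _ (by positivity)

/-- If the weight `u` belongs to `B_p`, then there is `C' > 0` such that for
every `n ∈ ℕ` and `a ∈ [0,1]`, `∫_a^1 (a/t)^p u(n+t) dt ≤ C' ∫_0^{n+a} u(t) dt`. -/
theorem stmt11 (u : ℝ → ℝ≥0) (hu : Measurable u)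
    (hloc : MeasureTheory.LocallyIntegrableOn (fun t => (u t : ℝ)) (Set.Ioi 0))
    (p : ℝ) (hp : 0 < p) (hBp : BpWeight u p) :
    ∃ C' : ℝ, 0 < C' ∧ ∀ n : ℕ, ∀ a ∈ Set.Icc (0 : ℝ) 1,
      ∫⁻ t in Set.Ioc a 1, ENNReal.ofReal ((a / t) ^ p) * (u ((n : ℝ) + t) : ℝ≥0∞) ≤
        ENNReal.ofReal C' * ∫⁻ t in Set.Ioc (0 : ℝ) ((n : ℝ) + a), (u t : ℝ≥0∞) :=
  stmt11_general u p hp hBp
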